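/- Let X be a T×K real matrix of full column rank and Γ a T×T matrix with ‖Γ‖ < 1. With P = X(XᵀX)⁻¹Xᵀ, M = I−P, P_Γ = X(Xᵀ(I−Γ)X)⁻¹Xᵀ(I−Γ), and M_Γ = I − P_Γ, the identities P_Γ = (I−PΓ)⁻¹P(I−Γ) and M_Γ = (I−PΓ)⁻¹M hold. -/

import Mathlib

/-!
Everything follows from `(I - PΓ) P_Γ = P (I - Γ)`, which uses only `PX = X` and the
invertibility of `Xᵀ(I - Γ)X`; subtracting it from `I - PΓ` gives `(I - PΓ) M_Γ = M`.
The invertibility statements come from `u ⬝ (I - Γ) u ≥ (1 - ‖Γ‖) ‖u‖² > 0` for `u ≠ 0`: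
it makes `Xᵀ(I - Γ)X` nonsingular when `X` is injective, and it rules out a kernel vector
`v = PΓv` of `I - PΓ`, since such a `v` lies in the range of the symmetric projection `P`,
whence `v ⬝ Γv = v ⬝ v`.
-/

open Matrix

namespace Matrix

section Real

variable {n : Type*} [Fintype n] [DecidableEq n]

open scoped RealInnerProductSpace in
theorem dotProduct_mulVec_le_norm_toEuclideanCLM (Γ : Matrix n n ℝ) (u : n → ℝ) :
    u ⬝ᵥ (Γ *ᵥ u) ≤ ‖toEuclideanCLM (𝕜 := ℝ) Γ‖ * (u ⬝ᵥ u) := by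
  set x : EuclideanSpace ℝ n := WithLp.toLp 2 u
  calc u ⬝ᵥ (Γ *ᵥ u) = ⟪x, toEuclideanCLM (𝕜 := ℝ) Γ x⟫ := (inner_toEuclideanCLM Γ x x).symm
    _ ≤ ‖x‖ * ‖toEuclideanCLM (𝕜 := ℝ) Γ x‖ := real_inner_le_norm _ _
    _ ≤ ‖x‖ * (‖toEuclideanCLM (𝕜 := ℝ) Γ‖ * ‖x‖) := by
      gcongr; exact ContinuousLinearMap.le_opNorm _ _
    _ = ‖toEuclideanCLM (𝕜 := ℝ) Γ‖ * ⟪x, x⟫ := by rw [real_inner_self_eq_norm_sq]; ring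
    _ = ‖toEuclideanCLM (𝕜 := ℝ) Γ‖ * (u ⬝ᵥ u) := by
      rw [EuclideanSpace.inner_toLp_toLp, star_trivial]

theorem eq_zero_of_dotProduct_one_sub_mulVec_eq_zero {Γ : Matrix n n ℝ}
    (hΓ : ‖toEuclideanCLM (𝕜 := ℝ) Γ‖ < 1) {u : n → ℝ} (hu : u ⬝ᵥ ((1 - Γ) *ᵥ u) = 0) :
    u = 0 := by
  rw [sub_mulVec, one_mulVec, dotProduct_sub, sub_eq_zero] at hu
  have hle := dotProduct_mulVec_le_norm_toEuclideanCLM Γ u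
  have hnonneg : 0 ≤ u ⬝ᵥ u := dotProduct_self_star_nonneg u
  exact dotProduct_self_eq_zero.mp (by nlinarith)

end Real

section Field

variable {m n K : Type*} [Fintype n] [Field K]

theorem mulVec_injective_of_rank_eq_card {X : Matrix m n K} (hX : X.rank = Fintype.card n) :
    Function.Injective X.mulVec := by
  rw [mulVec_injective_iff, linearIndependent_iff_card_eq_finrank_span, ← hX,
    rank_eq_finrank_span_cols]
  rfl

variable [Fintype m]

theorem dotProduct_transpose_mul_mul_mulVec (X : Matrix m n K) (A : Matrix m m K) (v : n → K) :
    v ⬝ᵥ ((Xᵀ * A * X) *ᵥ v) = (X *ᵥ v) ⬝ᵥ (A *ᵥ (X *ᵥ v)) := by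
  rw [← mulVec_mulVec, ← mulVec_mulVec, dotProduct_mulVec, vecMul_transpose]

variable [DecidableEq n]

theorem isUnit_transpose_mul_mul {X : Matrix m n K} {A : Matrix m m K}
    (hX : Function.Injective X.mulVec) (hA : ∀ u, u ⬝ᵥ (A *ᵥ u) = 0 → u = 0) :
    IsUnit (Xᵀ * A * X) := by
  rw [← mulVec_injective_iff_isUnit, ← coe_mulVecLin, injective_iff_map_eq_zero]
  intro v hv
  have hXv : X *ᵥ v = 0 := hA _ <| by
    rw [← dotProduct_transpose_mul_mul_mulVec, ← mulVecLin_apply, hv, dotProduct_zero]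
  exact hX (hXv.trans (mulVec_zero X).symm)

theorem isUnit_one_sub_mul {P Γ : Matrix n n K} (hPs : P.IsSymm) (hPP : IsIdempotentElem P)
    (hΓ : ∀ u, u ⬝ᵥ ((1 - Γ) *ᵥ u) = 0 → u = 0) : IsUnit (1 - P * Γ) := by
  rw [← mulVec_injective_iff_isUnit, ← coe_mulVecLin, injective_iff_map_eq_zero]
  intro v hv
  rw [mulVecLin_apply, sub_mulVec, one_mulVec, sub_eq_zero, eq_comm, ← mulVec_mulVec] at hv
  have hPv : P *ᵥ v = v := by rw [← hv, mulVec_mulVec, hPP.eq]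
  have hvΓv : v ⬝ᵥ (Γ *ᵥ v) = v ⬝ᵥ v := by
    nth_rw 1 [← hPv, ← hPs.eq, mulVec_transpose, ← dotProduct_mulVec, hv]
  refine hΓ v ?_
  rw [sub_mulVec, one_mulVec, dotProduct_sub, hvΓv, sub_self]

end Field

section CommRing

variable {m n R : Type*} [Fintype m] [Fintype n] [DecidableEq n] [CommRing R]

theorem isSymm_mul_inv_transpose_mul_self_mul_transpose (X : Matrix m n R) :
    (X * (Xᵀ * X)⁻¹ * Xᵀ).IsSymm := by
  rw [IsSymm, transpose_mul, transpose_mul, transpose_transpose, transpose_nonsing_inv,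
    transpose_mul, transpose_transpose, Matrix.mul_assoc]

theorem mul_inv_transpose_mul_self_mul_transpose_mul_self {X : Matrix m n R}
    (hX : IsUnit (Xᵀ * X).det) : X * (Xᵀ * X)⁻¹ * Xᵀ * X = X := by
  rw [Matrix.mul_assoc, Matrix.mul_assoc, nonsing_inv_mul _ hX, Matrix.mul_one]

theorem isIdempotentElem_mul_inv_transpose_mul_self_mul_transpose {X : Matrix m n R}
    (hX : IsUnit (Xᵀ * X).det) : IsIdempotentElem (X * (Xᵀ * X)⁻¹ * Xᵀ) := by
  have hPX := mul_inv_transpose_mul_self_mul_transpose_mul_self hX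
  calc _ = X * (Xᵀ * X)⁻¹ * Xᵀ * X * (Xᵀ * X)⁻¹ * Xᵀ := by simp only [Matrix.mul_assoc]
    _ = _ := by rw [hPX]

variable [DecidableEq m]

theorem one_sub_mul_mul_obliqueProjection {X : Matrix m n R} {Γ : Matrix m m R}
    (hX : IsUnit (Xᵀ * X).det) (hΓ : IsUnit (Xᵀ * (1 - Γ) * X).det) :
    (1 - X * (Xᵀ * X)⁻¹ * Xᵀ * Γ) * (X * (Xᵀ * (1 - Γ) * X)⁻¹ * (Xᵀ * (1 - Γ))) =
      X * (Xᵀ * X)⁻¹ * Xᵀ * (1 - Γ) := by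
  set P := X * (Xᵀ * X)⁻¹ * Xᵀ
  have hPX : P * X = X := mul_inv_transpose_mul_self_mul_transpose_mul_self hX
  have hX_left : (1 - P * Γ) * X = P * (1 - Γ) * X := by
    rw [Matrix.sub_mul, Matrix.mul_sub, Matrix.sub_mul, Matrix.one_mul, Matrix.mul_one, hPX,
      Matrix.mul_assoc]
  have hcancel : P * (1 - Γ) * X * (Xᵀ * (1 - Γ) * X)⁻¹ = X * (Xᵀ * X)⁻¹ := by
    calc _ = X * (Xᵀ * X)⁻¹ * (Xᵀ * (1 - Γ) * X) * (Xᵀ * (1 - Γ) * X)⁻¹ := by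
          simp only [P, Matrix.mul_assoc]
      _ = _ := mul_nonsing_inv_cancel_right _ _ hΓ
  calc _ = (1 - P * Γ) * X * (Xᵀ * (1 - Γ) * X)⁻¹ * (Xᵀ * (1 - Γ)) := by
        simp only [Matrix.mul_assoc]
    _ = P * (1 - Γ) := by rw [hX_left, hcancel]; simp only [P, Matrix.mul_assoc]

end CommRing

end Matrix

/-- With `P = X(XᵀX)⁻¹Xᵀ`, `M = I−P`, `P_Γ = X(Xᵀ(I−Γ)X)⁻¹Xᵀ(I−Γ)` and `M_Γ = I − P_Γ`,
the identities `P_Γ = (I−PΓ)⁻¹P(I−Γ)` and `M_Γ = (I−PΓ)⁻¹M` hold. -/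
theorem oblique_projection_identities {T K : ℕ}
    (X : Matrix (Fin T) (Fin K) ℝ) (Γ : Matrix (Fin T) (Fin T) ℝ)
    (hX : X.rank = K) (hΓ : ‖toEuclideanCLM (𝕜 := ℝ) Γ‖ < 1)
    (P M PΓ MΓ : Matrix (Fin T) (Fin T) ℝ)
    (hP : P = X * (Xᵀ * X)⁻¹ * Xᵀ) (hM : M = 1 - P)
    (hPΓ : PΓ = X * (Xᵀ * (1 - Γ) * X)⁻¹ * (Xᵀ * (1 - Γ)))
    (hMΓ : MΓ = 1 - PΓ) :
    PΓ = (1 - P * Γ)⁻¹ * P * (1 - Γ) ∧ MΓ = (1 - P * Γ)⁻¹ * M := by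
  have hXinj : Function.Injective X.mulVec :=
    mulVec_injective_of_rank_eq_card (by rwa [Fintype.card_fin])
  have hΓ_aniso : ∀ u, u ⬝ᵥ ((1 - Γ) *ᵥ u) = 0 → u = 0 :=
    fun _ ↦ eq_zero_of_dotProduct_one_sub_mulVec_eq_zero hΓ
  have hG : IsUnit (Xᵀ * X).det := by
    rw [← isUnit_iff_isUnit_det, ← Matrix.mul_one Xᵀ]
    exact isUnit_transpose_mul_mul hXinj fun u hu ↦
      dotProduct_self_eq_zero.mp (by rwa [one_mulVec] at hu)
  have hB : IsUnit (Xᵀ * (1 - Γ) * X).det :=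
    (isUnit_iff_isUnit_det _).mp (isUnit_transpose_mul_mul hXinj hΓ_aniso)
  have hU : IsUnit (1 - P * Γ).det := by
    rw [← isUnit_iff_isUnit_det, hP]
    exact isUnit_one_sub_mul (isSymm_mul_inv_transpose_mul_self_mul_transpose X)
      (isIdempotentElem_mul_inv_transpose_mul_self_mul_transpose hG) hΓ_aniso
  have hPΓ_eq : (1 - P * Γ) * PΓ = P * (1 - Γ) := by
    rw [hP, hPΓ]; exact one_sub_mul_mul_obliqueProjection hG hB
  have hMΓ_eq : (1 - P * Γ) * MΓ = M := by
    rw [hMΓ, hM, mul_sub, hPΓ_eq]; noncomm_ring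
  constructor
  · rw [Matrix.mul_assoc, ← hPΓ_eq, nonsing_inv_mul_cancel_left _ _ hU]
  · rw [← hMΓ_eq, nonsing_inv_mul_cancel_left _ _ hU]
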